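/- Let μ, π be probability measures on ℝ^d and K = K_W a Gibbs kernel satisfying LS_loc(ρ) and J₂(κ). Assume μ satisfies T2(υ). Set η := πK and Q := μ×K, and let P* ∈ Π(μ, η) minimize Q′ ↦ H(Q′|Q) over Π(μ, η). Then H(η | μK) ≤ H(P* | Q) ≤ E_K(π | μ) ≤ κ²ρυ H(π | μ). -/

import Mathlib

open MeasureTheory ProbabilityTheory ENNReal
open scoped RealInnerProductSpace Classical

noncomputable section

/-- Euclidean space `ℝ^d`. -/
abbrev Ed (d : ℕ) : Type := EuclideanSpace ℝ (Fin d)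

/-- Relative entropy `H(ν | μ)`: `∫ log (dν/dμ) dν` when `ν ≪ μ` and the
log-likelihood ratio is integrable, `∞` otherwise. -/
def relEnt {α : Type*} [MeasurableSpace α] (ν μ : Measure α) : ℝ≥0∞ :=
  if ν ≪ μ ∧ Integrable (MeasureTheory.llr ν μ) ν then
    ENNReal.ofReal (∫ x, MeasureTheory.llr ν μ x ∂ν) else ⊤

/-- `P` is a coupling of `μ` and `ν`. -/
def isCoupling {α β : Type*} [MeasurableSpace α] [MeasurableSpace β]
    (P : Measure (α × β)) (μ : Measure α) (ν : Measure β) : Prop :=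
  P.map Prod.fst = μ ∧ P.map Prod.snd = ν

/-- Squared 2-Wasserstein distance. -/
def W2sq {d : ℕ} (μ ν : Measure (Ed d)) : ℝ≥0∞ :=
  ⨅ (P : Measure (Ed d × Ed d)) (_ : isCoupling P μ ν),
    ∫⁻ p, ENNReal.ofReal (‖p.1 - p.2‖ ^ 2) ∂P

/-- Quadratic transportation cost inequality `T2(ρ)`. -/
def SatT2 {d : ℕ} (μ : Measure (Ed d)) (ρ : ℝ) : Prop :=
  ∀ ν : Measure (Ed d), IsProbabilityMeasure ν →
    (1 / 2 : ℝ≥0∞) * W2sq ν μ ≤ ENNReal.ofReal ρ * relEnt ν μ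

/-- Transport of a measure by a Markov kernel: `μK`. -/
def mbind {d : ℕ} (μ : Measure (Ed d)) (K : Kernel (Ed d) (Ed d)) : Measure (Ed d) :=
  μ.bind fun x => K x

/-- `K` is the Gibbs kernel with potential `W`: `K(x,dy) = e^{-W(x,y)} dy`,
with `W` measurable and `y ↦ W(x,y)` of class `C¹`. -/
def IsGibbs {d : ℕ} (Wf : Ed d → Ed d → ℝ) (K : Kernel (Ed d) (Ed d)) : Prop :=
  Measurable (Function.uncurry Wf) ∧ (∀ x, ContDiff ℝ 1 (Wf x)) ∧
    ∀ x, K x = (volume : Measure (Ed d)).withDensity fun y => ENNReal.ofReal (Real.exp (-Wf x y))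

/-- Fisher information cost of a Gibbs kernel. -/
def fisherCost {d : ℕ} (Wf : Ed d → Ed d → ℝ) (K : Kernel (Ed d) (Ed d)) (x₁ x₂ : Ed d) : ℝ≥0∞ :=
  ∫⁻ y, ENNReal.ofReal (‖gradient (Wf x₁) y - gradient (Wf x₂) y‖ ^ 2) ∂(K x₁)

/-- Local log-Sobolev inequality `LS_loc(ρ)` for a Gibbs kernel. -/
def LSloc {d : ℕ} (Wf : Ed d → Ed d → ℝ) (K : Kernel (Ed d) (Ed d)) (ρ : ℝ) : Prop :=
  ∀ x₁ x₂ : Ed d, relEnt (K x₁) (K x₂) ≤ ENNReal.ofReal (ρ / 2) * fisherCost Wf K x₁ x₂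

/-- Fisher–Lipschitz inequality `J₂(κ)` for a Gibbs kernel. -/
def FisherLip {d : ℕ} (Wf : Ed d → Ed d → ℝ) (K : Kernel (Ed d) (Ed d)) (κ : ℝ) : Prop :=
  ∀ x₁ x₂ : Ed d, fisherCost Wf K x₁ x₂ ≤ ENNReal.ofReal (κ ^ 2 * ‖x₁ - x₂‖ ^ 2)

/-- Entropic transport cost `E_K(ν | μ)`. -/
def entCost {d : ℕ} (K : Kernel (Ed d) (Ed d)) (ν μ : Measure (Ed d)) : ℝ≥0∞ :=
  ⨅ (P : Measure (Ed d × Ed d)) (_ : isCoupling P ν μ),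
    ∫⁻ p, relEnt (K p.1) (K p.2) ∂P

/-- `φ(ε) = ε⁻¹ / (√(1/4 + ε⁻¹) + 1/2)`. -/
def phi (ε : ℝ) : ℝ := ε⁻¹ / (Real.sqrt (1 / 4 + ε⁻¹) + 1 / 2)

/-- Application of a matrix to a vector of `ℝ^d`. -/
def mApp {d : ℕ} (M : Matrix (Fin d) (Fin d) ℝ) (x : Ed d) : Ed d :=
  Matrix.toEuclideanLin M x

/-- Spectral norm of a matrix. -/
def spec {d : ℕ} (M : Matrix (Fin d) (Fin d) ℝ) : ℝ :=
  ‖LinearMap.toContinuousLinearMap (Matrix.toEuclideanLin M)‖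

/-- Loewner order on matrices. -/
def loewnerLE {d : ℕ} (A B : Matrix (Fin d) (Fin d) ℝ) : Prop := (B - A).PosSemidef

/-- Principal square root of a positive semidefinite matrix (junk value otherwise). -/
def msqrt {d : ℕ} (A : Matrix (Fin d) (Fin d) ℝ) : Matrix (Fin d) (Fin d) ℝ :=
  if h : A.PosSemidef then h.1.eigenvectorUnitary.1 *
    Matrix.diagonal (fun i => Real.sqrt (h.1.eigenvalues i)) *
    (star h.1.eigenvectorUnitary : Matrix (Fin d) (Fin d) ℝ) else 0

/-- Smallest eigenvalue of a symmetric matrix (junk value otherwise). -/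
def lmin {d : ℕ} (A : Matrix (Fin d) (Fin d) ℝ) : ℝ :=
  if h : A.IsHermitian then ⨅ i, h.eigenvalues i else 0

/-- Largest eigenvalue of a symmetric matrix (junk value otherwise). -/
def lmax {d : ℕ} (A : Matrix (Fin d) (Fin d) ℝ) : ℝ :=
  if h : A.IsHermitian then ⨆ i, h.eigenvalues i else 0

/-- Riccati map `Ricc_ϖ(s) = (I + (ϖ + s)⁻¹)⁻¹`. -/
def Ricc {d : ℕ} (ϖ s : Matrix (Fin d) (Fin d) ℝ) : Matrix (Fin d) (Fin d) ℝ :=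
  (1 + (ϖ + s)⁻¹)⁻¹

/-- Fixed point `r_ϖ = -ϖ/2 + (ϖ + (ϖ/2)²)^{1/2}` of the Riccati map. -/
def riccFix {d : ℕ} (ϖ : Matrix (Fin d) (Fin d) ℝ) : Matrix (Fin d) (Fin d) ℝ :=
  -((1 / 2 : ℝ) • ϖ) + msqrt (ϖ + ((1 / 2 : ℝ) • ϖ) ^ 2)

/-- `Ψ_γ(v) = (I + γ v γᵀ)⁻¹`. -/
def Psim {d : ℕ} (γ v : Matrix (Fin d) (Fin d) ℝ) : Matrix (Fin d) (Fin d) ℝ :=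
  (1 + γ * v * γ.transpose)⁻¹

/-- Hessian lower bound `∇²U ≥ M` (as quadratic forms). -/
def HessLB {d : ℕ} (U : Ed d → ℝ) (M : Matrix (Fin d) (Fin d) ℝ) : Prop :=
  ∀ x v : Ed d, ⟪v, mApp M v⟫ ≤ iteratedFDeriv ℝ 2 U x ![v, v]

/-- Hessian upper bound `∇²U ≤ M` (as quadratic forms). -/
def HessUB {d : ℕ} (U : Ed d → ℝ) (M : Matrix (Fin d) (Fin d) ℝ) : Prop :=
  ∀ x v : Ed d, iteratedFDeriv ℝ 2 U x ![v, v] ≤ ⟪v, mApp M v⟫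

/-- Linear-Gaussian reference potential `W(x,y) = -log g_τ(y - (α + βx))`. -/
def gaussW {d : ℕ} (a : Ed d) (β τ : Matrix (Fin d) (Fin d) ℝ) (x y : Ed d) : ℝ :=
  -Real.log ((Real.sqrt ((2 * Real.pi) ^ d * τ.det))⁻¹ *
    Real.exp (-(1 / 2) * ⟪y - (mApp β x + a), mApp τ⁻¹ (y - (mApp β x + a))⟫))

/-- Boltzmann–Gibbs measure `λ_U(dx) = e^{-U(x)} dx`. -/
def gibbsDensity {d : ℕ} (U : Ed d → ℝ) : Measure (Ed d) :=
  (volume : Measure (Ed d)).withDensity fun x => ENNReal.ofReal (Real.exp (-U x))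

/-- Conditional covariance `Σ_K(x) = (1/2) ∫∫ (y-z)(y-z)ᵀ K(x,dy) K(x,dz)`. -/
def condCov {d : ℕ} (K : Kernel (Ed d) (Ed d)) (x : Ed d) : Matrix (Fin d) (Fin d) ℝ :=
  Matrix.of fun i j =>
    (1 / 2) * ∫ p : Ed d × Ed d, (p.1 i - p.2 i) * (p.1 j - p.2 j) ∂((K x).prod (K x))

/-- Barycentric projection `K(I)(x) = ∫ y K(x,dy)`. -/
def bary {d : ℕ} (K : Kernel (Ed d) (Ed d)) (x : Ed d) : Ed d := ∫ y, y ∂(K x)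

/-- Gradient matrix of a vector field: `(i,j)` entry is `∂ᵢ hʲ(x)`. -/
def gradMat {d : ℕ} (h : Ed d → Ed d) (x : Ed d) : Matrix (Fin d) (Fin d) ℝ :=
  Matrix.of fun i j => gradient (fun x' => h x' j) x i

/-- Sinkhorn marginal flow `π_n`. -/
def piSeq {d : ℕ} (μ η : Measure (Ed d)) (K : ℕ → Kernel (Ed d) (Ed d)) (n : ℕ) :
    Measure (Ed d) :=
  if n % 2 = 0 then mbind μ (K n) else mbind η (K n)

/-- Sinkhorn bridges `𝒫_n`. -/
def PSeq {d : ℕ} (μ η : Measure (Ed d)) (K : ℕ → Kernel (Ed d) (Ed d)) (n : ℕ) :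
    Measure (Ed d × Ed d) :=
  if n % 2 = 0 then μ ⊗ₘ K n else (η ⊗ₘ K n).map Prod.swap

/-- `n`-fold composition of a Markov kernel. -/
def kpow {d : ℕ} (S : Kernel (Ed d) (Ed d)) : ℕ → Kernel (Ed d) (Ed d)
  | 0 => Kernel.id
  | n + 1 => (kpow S n) ∘ₖ S

end

section EntropyAux

variable {α : Type*} {β : Type*} [MeasurableSpace α] [MeasurableSpace β]

lemma llr_ge_aux {P m : Measure α} [SigmaFinite P] [SigmaFinite m] (h : P ≪ m) :
    ∀ᵐ x ∂P, 1 - (m.rnDeriv P x).toReal ≤ llr P m x := by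
  filter_upwards [Measure.rnDeriv_pos h, h.ae_le (Measure.rnDeriv_lt_top P m),
    Measure.inv_rnDeriv h] with x h0 htop hinv
  have ht : 0 < (P.rnDeriv m x).toReal := ENNReal.toReal_pos h0.ne' htop.ne
  have hlog : Real.log ((P.rnDeriv m x).toReal)⁻¹ ≤ ((P.rnDeriv m x).toReal)⁻¹ - 1 :=
    Real.log_le_sub_one_of_pos (inv_pos.mpr ht)
  rw [Real.log_inv] at hlog
  have hinv' : ((P.rnDeriv m x).toReal)⁻¹ = (m.rnDeriv P x).toReal := by
    rw [← ENNReal.toReal_inv]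
    exact congrArg ENNReal.toReal (by simpa using hinv)
  rw [hinv'] at hlog
  simp only [llr_def]
  linarith

lemma integrable_min_llr {P m : Measure α} [IsFiniteMeasure P] [IsFiniteMeasure m] (h : P ≪ m) :
    Integrable (fun x => min (llr P m x) 0) P := by
  refine Integrable.mono'
    ((Measure.integrable_toReal_rnDeriv (μ := m) (ν := P)).add (integrable_const 1))
    ((measurable_llr _ _).min measurable_const).aestronglyMeasurable ?_
  filter_upwards [llr_ge_aux h] with x hx
  have h0 : 0 ≤ (m.rnDeriv P x).toReal := ENNReal.toReal_nonneg
  have hmin : -((m.rnDeriv P x).toReal + 1) ≤ min (llr P m x) 0 :=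
    le_min (by linarith) (by linarith)
  have hmin' : min (llr P m x) 0 ≤ (m.rnDeriv P x).toReal + 1 :=
    (min_le_right _ _).trans (by linarith)
  rw [Real.norm_eq_abs, abs_le]
  exact ⟨hmin, hmin'⟩

lemma lintegral_neg_min_llr_le {P m : Measure α} [IsFiniteMeasure P] [IsFiniteMeasure m]
    (h : P ≪ m) :
    ∫⁻ x, ENNReal.ofReal (-min (llr P m x) 0) ∂P ≤ m Set.univ := by
  refine le_trans (lintegral_mono_ae ?_) Measure.lintegral_rnDeriv_le
  filter_upwards [llr_ge_aux h] with x hx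
  have h0 : 0 ≤ (m.rnDeriv P x).toReal := ENNReal.toReal_nonneg
  have hmin : -(m.rnDeriv P x).toReal ≤ min (llr P m x) 0 := le_min (by linarith) (by linarith)
  refine le_trans (ENNReal.ofReal_le_ofReal (by linarith)) ENNReal.ofReal_toReal_le

lemma integral_llr_nonneg {P m : Measure α} [IsProbabilityMeasure P] [IsFiniteMeasure m]
    (h : P ≪ m) (hm : m Set.univ ≤ 1) (hint : Integrable (llr P m) P) :
    0 ≤ ∫ x, llr P m x ∂P := by
  have hb : Integrable (fun x => 1 - (m.rnDeriv P x).toReal) P :=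
    (integrable_const 1).sub Measure.integrable_toReal_rnDeriv
  have h1 : ∫ x, (1 - (m.rnDeriv P x).toReal) ∂P ≤ ∫ x, llr P m x ∂P :=
    integral_mono_ae hb hint (llr_ge_aux h)
  have h2 : ∫ x, (m.rnDeriv P x).toReal ∂P ≤ 1 := by
    rw [integral_toReal (Measure.measurable_rnDeriv m P).aemeasurable
      (Measure.rnDeriv_lt_top m P)]
    calc (∫⁻ x, m.rnDeriv P x ∂P).toReal ≤ (m Set.univ).toReal := by
          refine ENNReal.toReal_mono (measure_ne_top m _) Measure.lintegral_rnDeriv_le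
      _ ≤ 1 := by
          simpa using ENNReal.toReal_mono ENNReal.one_ne_top hm
  have h3 : ∫ x, (1 - (m.rnDeriv P x).toReal) ∂P
      = 1 - ∫ x, (m.rnDeriv P x).toReal ∂P := by
    rw [integral_sub (integrable_const 1) Measure.integrable_toReal_rnDeriv]
    simp
  linarith

lemma relEnt_of_ac {ν μ : Measure α} (h1 : ν ≪ μ) (h2 : Integrable (llr ν μ) ν) :
    relEnt ν μ = ENNReal.ofReal (∫ x, llr ν μ x ∂ν) := by
  unfold relEnt; exact if_pos ⟨h1, h2⟩

lemma relEnt_of_not {ν μ : Measure α} (h : ¬(ν ≪ μ ∧ Integrable (llr ν μ) ν)) :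
    relEnt ν μ = ⊤ := by
  unfold relEnt; exact if_neg h

end EntropyAux


section DPI

variable {α : Type*} {β : Type*} [MeasurableSpace α] [MeasurableSpace β]

lemma relEnt_map_le (P Q : Measure α) [IsProbabilityMeasure P] [IsProbabilityMeasure Q]
    {f : α → β} (hf : Measurable f) : relEnt (P.map f) (Q.map f) ≤ relEnt P Q := by
  by_cases hPQ : P ≪ Q ∧ Integrable (llr P Q) P
  swap
  · rw [relEnt_of_not hPQ]; exact le_top
  obtain ⟨hac, hint⟩ := hPQ
  haveI : IsProbabilityMeasure (P.map f) := Measure.isProbabilityMeasure_map hf.aemeasurable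
  haveI : IsProbabilityMeasure (Q.map f) := Measure.isProbabilityMeasure_map hf.aemeasurable
  set a := P.map f with ha_def
  set b := Q.map f with hb_def
  have hab : a ≪ b := hac.map hf
  set φ : α → ℝ≥0∞ := fun x => a.rnDeriv b (f x) with hφ_def
  have hφm : Measurable φ := (Measure.measurable_rnDeriv a b).comp hf
  have hS : MeasurableSet {y : β | a.rnDeriv b y = 0} :=
    Measure.measurable_rnDeriv a b (measurableSet_singleton 0)
  have ha0 : a {y | a.rnDeriv b y = 0} = 0 := by
    have h := Measure.rnDeriv_pos hab
    rw [ae_iff] at h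
    convert h using 2
    ext y
    simp [pos_iff_ne_zero]
  have hP0 : P {x | φ x = 0} = 0 := by
    have : {x | φ x = 0} = f ⁻¹' {y | a.rnDeriv b y = 0} := rfl
    rw [this, ← Measure.map_apply hf hS, ← ha_def, ha0]
  have hφ_pos : ∀ᵐ x ∂P, 0 < φ x := by
    rw [ae_iff]
    convert hP0 using 2
    ext x
    simp [pos_iff_ne_zero]
  have hφ_topQ : ∀ᵐ x ∂Q, φ x < ∞ := by
    have hb' : ∀ᵐ y ∂b, a.rnDeriv b y < ∞ := Measure.rnDeriv_lt_top a b
    rw [hb_def, ae_map_iff hf.aemeasurable] at hb'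
    · exact hb'
    · exact (Measure.measurable_rnDeriv a b) (measurableSet_lt measurable_id measurable_const)
  have hφ_top : ∀ᵐ x ∂P, φ x < ∞ := hac.ae_le hφ_topQ
  have hr_pos : ∀ᵐ x ∂P, 0 < P.rnDeriv Q x := Measure.rnDeriv_pos hac
  have hr_top : ∀ᵐ x ∂P, P.rnDeriv Q x < ∞ := hac.ae_le (Measure.rnDeriv_lt_top P Q)
  set Qt := Q.withDensity φ with hQt_def
  have hQt_univ : Qt Set.univ ≤ 1 := by
    rw [hQt_def, withDensity_apply _ MeasurableSet.univ, setLIntegral_univ]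
    calc ∫⁻ x, φ x ∂Q = ∫⁻ y, a.rnDeriv b y ∂b :=
          (lintegral_map (Measure.measurable_rnDeriv a b) hf).symm
      _ ≤ a Set.univ := Measure.lintegral_rnDeriv_le
      _ = 1 := measure_univ
  haveI hQtfin : IsFiniteMeasure Qt := ⟨lt_of_le_of_lt hQt_univ ENNReal.one_lt_top⟩
  set ψ : α → ℝ≥0∞ := fun x => (φ x)⁻¹ * P.rnDeriv Q x with hψ_def
  have hψm : Measurable ψ := hφm.inv.mul (Measure.measurable_rnDeriv P Q)
  have hrn0 : ∀ᵐ x ∂Q, φ x = 0 → P.rnDeriv Q x = 0 := by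
    have hps : P (f ⁻¹' {y | a.rnDeriv b y = 0}) = 0 := by
      rw [← Measure.map_apply hf hS, ← ha_def, ha0]
    have hsl := Measure.setLIntegral_rnDeriv hac (f ⁻¹' {y | a.rnDeriv b y = 0})
    rw [hps] at hsl
    have h2 := (setLIntegral_eq_zero_iff (hf hS) (Measure.measurable_rnDeriv P Q)).mp hsl
    filter_upwards [h2] with x hx hx0
    exact hx hx0
  have hkey : Q.withDensity (fun x => φ x * ψ x) = P := by
    have hcongr : (fun x => φ x * ψ x) =ᵐ[Q] P.rnDeriv Q := by
      filter_upwards [hrn0, hφ_topQ] with x h0 htop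
      rcases eq_or_ne (φ x) 0 with h | h
      · simp [hψ_def, h, h0 h]
      · rw [hψ_def, ← mul_assoc, ENNReal.mul_inv_cancel h htop.ne, one_mul]
    rw [withDensity_congr_ae hcongr, Measure.withDensity_rnDeriv_eq P Q hac]
  have hPeq : P = Qt.withDensity ψ := by
    rw [hQt_def, ← withDensity_mul _ hφm hψm, ← hkey]
    rfl
  have hPQt : P ≪ Qt := by
    rw [hPeq]; exact withDensity_absolutelyContinuous _ _
  have hrnt : P.rnDeriv Qt =ᵐ[Qt] ψ := by
    rw [hPeq]; exact Measure.rnDeriv_withDensity Qt hψm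
  have hrntP : P.rnDeriv Qt =ᵐ[P] ψ := hPQt.ae_le hrnt
  have hllr_t : llr P Qt =ᵐ[P] fun x => llr P Q x - llr a b (f x) := by
    filter_upwards [hrntP, hφ_pos, hφ_top, hr_pos, hr_top] with x hψx h0 htop hr0 hrt
    have hφt_pos : 0 < (φ x).toReal := ENNReal.toReal_pos h0.ne' htop.ne
    have hrt_pos : 0 < (P.rnDeriv Q x).toReal := ENNReal.toReal_pos hr0.ne' hrt.ne
    have h1 : llr P Qt x = Real.log ((ψ x).toReal) := by
      simp only [llr_def, hψx]
    rw [h1, hψ_def]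
    simp only []
    rw [ENNReal.toReal_mul, ENNReal.toReal_inv,
      Real.log_mul (by positivity) hrt_pos.ne', Real.log_inv]
    simp only [llr_def, hφ_def]
    ring
  have ineg_t : Integrable (fun x => min (llr P Qt x) 0) P := integrable_min_llr hPQt
  have ineg_ab : Integrable (fun x => min (llr a b (f x)) 0) P := by
    have h1 : Integrable (fun y => min (llr a b y) 0) a := integrable_min_llr hab
    rw [ha_def] at h1
    exact (integrable_map_measure
      (((measurable_llr a b).min measurable_const).aestronglyMeasurable)
      hf.aemeasurable).mp h1
  set ℓ : α → ℝ := fun x => llr a b (f x) with hℓ_def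
  have hℓsm : AEStronglyMeasurable ℓ P :=
    ((measurable_llr a b).comp hf).aestronglyMeasurable
  have hl_int : Integrable ℓ P := by
    refine Integrable.mono' (hint.abs.add ((ineg_t.abs).add ineg_ab.abs)) hℓsm ?_
    filter_upwards [hllr_t] with x hx
    have hA1 : -|llr P Q x| ≤ llr P Q x := neg_abs_le _
    have hA2 : llr P Q x ≤ |llr P Q x| := le_abs_self _
    have hB0 : min (llr P Qt x) 0 ≤ 0 := min_le_right _ _
    have hB1 : |min (llr P Qt x) 0| = -min (llr P Qt x) 0 := abs_of_nonpos hB0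
    have hB2 : min (llr P Qt x) 0 ≤ llr P Qt x := min_le_left _ _
    have hC0 : min (ℓ x) 0 ≤ 0 := min_le_right _ _
    have hC1 : |min (ℓ x) 0| = -min (ℓ x) 0 := abs_of_nonpos hC0
    have hC2 : min (ℓ x) 0 ≤ ℓ x := min_le_left _ _
    have heq : ℓ x = llr P Q x - llr P Qt x := by rw [hx]; ring
    rw [Real.norm_eq_abs]
    simp only [Pi.add_apply]
    rcases le_or_gt 0 (ℓ x) with hl | hl
    · rw [abs_of_nonneg hl]
      linarith [abs_nonneg (min (ℓ x) 0)]
    · rw [abs_of_neg hl]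
      have hmin : min (ℓ x) 0 = ℓ x := min_eq_left hl.le
      linarith [abs_nonneg (llr P Q x), abs_nonneg (min (llr P Qt x) 0)]
  have ill_ab : Integrable (llr a b) a := by
    rw [ha_def]
    exact (integrable_map_measure (stronglyMeasurable_llr a b).aestronglyMeasurable
      hf.aemeasurable).mpr hl_int
  have ill_t : Integrable (llr P Qt) P := by
    refine Integrable.congr (hint.sub hl_int) ?_
    filter_upwards [hllr_t] with x hx
    simp only [Pi.sub_apply, hℓ_def]
    rw [hx]
  have h0le : 0 ≤ ∫ x, llr P Qt x ∂P := integral_llr_nonneg hPQt hQt_univ ill_t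
  have hmap : ∫ y, llr a b y ∂a = ∫ x, ℓ x ∂P := by
    rw [ha_def]
    exact integral_map hf.aemeasurable (stronglyMeasurable_llr a b).aestronglyMeasurable
  have hsub : ∫ x, ℓ x ∂P = ∫ x, llr P Q x ∂P - ∫ x, llr P Qt x ∂P := by
    rw [← integral_sub hint ill_t]
    refine integral_congr_ae ?_
    filter_upwards [hllr_t] with x hx
    rw [hx]; ring
  rw [relEnt_of_ac hab ill_ab, relEnt_of_ac hac hint]
  refine ENNReal.ofReal_le_ofReal ?_
  rw [← ha_def, ← hb_def] at *
  rw [hmap, hsub]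
  linarith

end DPI

lemma ofReal_max_zero (x : ℝ) : ENNReal.ofReal (max x 0) = ENNReal.ofReal x := by
  rcases le_total x 0 with h | h
  · rw [max_eq_right h, ENNReal.ofReal_eq_zero.mpr le_rfl,
      Eq.comm, ENNReal.ofReal_eq_zero]
    exact h
  · rw [max_eq_left h]

section GibbsAux

variable {d : ℕ} {Wf : Ed d → Ed d → ℝ} {K : Kernel (Ed d) (Ed d)} [IsMarkovKernel K]

lemma hW_meas (hG : IsGibbs Wf K) (x : Ed d) : Measurable (Wf x) :=
  hG.1.comp measurable_prodMk_left

lemma gibbs_chain (hG : IsGibbs Wf K) (x₁ x₂ : Ed d) :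
    K x₁ = (K x₂).withDensity (fun y => ENNReal.ofReal (Real.exp (Wf x₂ y - Wf x₁ y))) := by
  rw [hG.2.2 x₁, hG.2.2 x₂, ← withDensity_mul _
    (show Measurable fun y => ENNReal.ofReal (Real.exp (-Wf x₂ y)) from
      (hW_meas hG x₂).neg.exp.ennreal_ofReal)
    (show Measurable fun y => ENNReal.ofReal (Real.exp (Wf x₂ y - Wf x₁ y)) from
      ((hW_meas hG x₂).sub (hW_meas hG x₁)).exp.ennreal_ofReal)]
  congr 1
  funext y
  simp only [Pi.mul_apply]
  rw [← ENNReal.ofReal_mul (Real.exp_nonneg _), ← Real.exp_add]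
  congr 2
  ring

lemma gibbs_ac (hG : IsGibbs Wf K) (x₁ x₂ : Ed d) : K x₁ ≪ K x₂ := by
  rw [gibbs_chain hG x₁ x₂]
  exact withDensity_absolutelyContinuous _ _

lemma gibbs_llr (hG : IsGibbs Wf K) (x₁ x₂ : Ed d) :
    llr (K x₁) (K x₂) =ᵐ[K x₁] fun y => Wf x₂ y - Wf x₁ y := by
  have h1 : (K x₁).rnDeriv (K x₂)
      =ᵐ[K x₂] fun y => ENNReal.ofReal (Real.exp (Wf x₂ y - Wf x₁ y)) := by
    rw [gibbs_chain hG x₁ x₂]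
    exact Measure.rnDeriv_withDensity _ (((hW_meas hG x₂).sub (hW_meas hG x₁)).exp.ennreal_ofReal)
  filter_upwards [(gibbs_ac hG x₁ x₂).ae_le h1] with y hy
  simp only [llr_def, hy, ENNReal.toReal_ofReal (Real.exp_nonneg _), Real.log_exp]

lemma gibbs_relEnt_ge (hG : IsGibbs Wf K) (x₁ x₂ : Ed d) :
    ENNReal.ofReal (∫ y, (Wf x₂ y - Wf x₁ y) ∂(K x₁)) ≤ relEnt (K x₁) (K x₂) := by
  by_cases hi : Integrable (llr (K x₁) (K x₂)) (K x₁)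
  · rw [relEnt_of_ac (gibbs_ac hG x₁ x₂) hi]
    exact le_of_eq (congrArg ENNReal.ofReal (integral_congr_ae (gibbs_llr hG x₁ x₂)).symm)
  · rw [relEnt_of_not (fun h => hi h.2)]
    exact le_top

lemma gibbs_neg_part (hG : IsGibbs Wf K) (x₁ x₂ : Ed d) :
    ∫⁻ y, ENNReal.ofReal (-min (Wf x₂ y - Wf x₁ y) 0) ∂(K x₁) ≤ 1 := by
  have h1 : ∫⁻ y, ENNReal.ofReal (-min (Wf x₂ y - Wf x₁ y) 0) ∂(K x₁)
      = ∫⁻ y, ENNReal.ofReal (-min (llr (K x₁) (K x₂) y) 0) ∂(K x₁) := by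
    refine lintegral_congr_ae ?_
    filter_upwards [gibbs_llr hG x₁ x₂] with y hy
    rw [hy]
  rw [h1]
  exact (lintegral_neg_min_llr_le (gibbs_ac hG x₁ x₂)).trans_eq measure_univ

lemma gibbs_pos_part (hG : IsGibbs Wf K) (x₁ x₂ : Ed d) :
    ∫⁻ y, ENNReal.ofReal (max (Wf x₂ y - Wf x₁ y) 0) ∂(K x₁)
      ≤ relEnt (K x₁) (K x₂) + 1 := by
  set φ : Ed d → ℝ := fun y => Wf x₂ y - Wf x₁ y with hφ
  have hφm : Measurable φ := (hW_meas hG x₂).sub (hW_meas hG x₁)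
  by_cases hi : Integrable φ (K x₁)
  · have hilr : Integrable (llr (K x₁) (K x₂)) (K x₁) :=
      Integrable.congr hi (gibbs_llr hG x₁ x₂).symm
    rw [relEnt_of_ac (gibbs_ac hG x₁ x₂) hilr]
    have hmin_int : Integrable (fun y => min (φ y) 0) (K x₁) := by
      refine Integrable.mono' hi.abs (hφm.min measurable_const).aestronglyMeasurable ?_
      refine ae_of_all _ fun y => ?_
      rw [Real.norm_eq_abs]
      rcases le_total (φ y) 0 with h | h
      · rw [min_eq_left h]
      · rw [min_eq_right h]
        simp [abs_nonneg]
    have hmax_int : Integrable (fun y => max (φ y) 0) (K x₁) := hi.pos_part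
    have e1 : ∫⁻ y, ENNReal.ofReal (max (φ y) 0) ∂(K x₁)
        = ENNReal.ofReal (∫ y, max (φ y) 0 ∂(K x₁)) :=
      (ofReal_integral_eq_lintegral_ofReal hmax_int (ae_of_all _ fun y => le_max_right _ _)).symm
    have e2 : ∫ y, max (φ y) 0 ∂(K x₁)
        = ∫ y, φ y ∂(K x₁) - ∫ y, min (φ y) 0 ∂(K x₁) := by
      rw [← integral_sub hi hmin_int]
      refine integral_congr_ae (ae_of_all _ fun y => ?_)
      have := max_add_min (φ y) 0
      simp only []
      linarith
    have e3 : ENNReal.ofReal (∫ y, -min (φ y) 0 ∂(K x₁))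
        = ∫⁻ y, ENNReal.ofReal (-min (φ y) 0) ∂(K x₁) :=
      ofReal_integral_eq_lintegral_ofReal hmin_int.neg
        (ae_of_all _ fun y => neg_nonneg.mpr (min_le_right _ _))
    calc ∫⁻ y, ENNReal.ofReal (max (φ y) 0) ∂(K x₁)
        = ENNReal.ofReal (∫ y, max (φ y) 0 ∂(K x₁)) := e1
      _ ≤ ENNReal.ofReal (∫ y, φ y ∂(K x₁)) + ENNReal.ofReal (∫ y, -min (φ y) 0 ∂(K x₁)) := by
          rw [e2, sub_eq_add_neg, ← integral_neg]
          exact ENNReal.ofReal_add_le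
      _ ≤ ENNReal.ofReal (∫ y, llr (K x₁) (K x₂) y ∂(K x₁)) + 1 := by
          refine add_le_add (le_of_eq ?_) ?_
          · exact congrArg ENNReal.ofReal (integral_congr_ae (gibbs_llr hG x₁ x₂)).symm
          · rw [e3]; exact gibbs_neg_part hG x₁ x₂
  · rw [relEnt_of_not (fun h => hi (h.2.congr (gibbs_llr hG x₁ x₂)))]
    rw [top_add]
    exact le_top

lemma compProd_map_snd (μ : Measure (Ed d)) [IsProbabilityMeasure μ] :
    (μ ⊗ₘ K).map Prod.snd = mbind μ K := by
  refine Measure.ext fun s hs => ?_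
  rw [Measure.map_apply measurable_snd hs, Measure.compProd_apply (measurable_snd hs)]
  rw [mbind, Measure.bind_apply hs K.measurable.aemeasurable]
  refine lintegral_congr fun x => ?_
  congr 1

lemma T_eq (hG : IsGibbs Wf K) (R : Measure (Ed d × Ed d)) [IsProbabilityMeasure R] :
    R ⊗ₘ K.comap Prod.fst measurable_fst =
      (R ⊗ₘ K.comap Prod.snd measurable_snd).withDensity
        (fun p => ENNReal.ofReal (Real.exp (Wf p.1.2 p.2 - Wf p.1.1 p.2))) := by
  have hφm : Measurable fun p : (Ed d × Ed d) × Ed d => Wf p.1.2 p.2 - Wf p.1.1 p.2 :=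
    (hG.1.comp ((measurable_snd.comp measurable_fst).prodMk measurable_snd)).sub
      (hG.1.comp ((measurable_fst.comp measurable_fst).prodMk measurable_snd))
  have hFm : Measurable fun p : (Ed d × Ed d) × Ed d =>
      ENNReal.ofReal (Real.exp (Wf p.1.2 p.2 - Wf p.1.1 p.2)) := hφm.exp.ennreal_ofReal
  refine Measure.ext fun s hs => ?_
  rw [withDensity_apply _ hs, ← lintegral_indicator hs,
    Measure.lintegral_compProd (hFm.indicator hs), Measure.compProd_apply hs]
  refine lintegral_congr fun w => ?_
  have hpre : MeasurableSet (Prod.mk w ⁻¹' s) := measurable_prodMk_left hs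
  rw [Kernel.comap_apply, Kernel.comap_apply]
  calc K w.1 (Prod.mk w ⁻¹' s)
      = ((K w.2).withDensity
          (fun y => ENNReal.ofReal (Real.exp (Wf w.2 y - Wf w.1 y)))) (Prod.mk w ⁻¹' s) := by
        rw [← gibbs_chain hG w.1 w.2]
    _ = ∫⁻ y in Prod.mk w ⁻¹' s,
          ENNReal.ofReal (Real.exp (Wf w.2 y - Wf w.1 y)) ∂(K w.2) := withDensity_apply _ hpre
    _ = ∫⁻ y, (Prod.mk w ⁻¹' s).indicator
          (fun y => ENNReal.ofReal (Real.exp (Wf w.2 y - Wf w.1 y))) y ∂(K w.2) :=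
        (lintegral_indicator hpre _).symm
    _ = ∫⁻ y, s.indicator (fun p : (Ed d × Ed d) × Ed d =>
          ENNReal.ofReal (Real.exp (Wf p.1.2 p.2 - Wf p.1.1 p.2))) (w, y) ∂(K w.2) := by
        refine lintegral_congr fun y => ?_
        simp only [Set.indicator_apply, Set.mem_preimage]

lemma Tmap_g (R : Measure (Ed d × Ed d)) [IsProbabilityMeasure R] :
    (R ⊗ₘ K.comap Prod.snd measurable_snd).map
        (fun p : (Ed d × Ed d) × Ed d => (p.1.2, p.2))
      = (R.map Prod.snd) ⊗ₘ K := by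
  haveI : IsProbabilityMeasure (R.map Prod.snd) :=
    Measure.isProbabilityMeasure_map measurable_snd.aemeasurable
  have hg : Measurable fun p : (Ed d × Ed d) × Ed d => (p.1.2, p.2) :=
    (measurable_snd.comp measurable_fst).prodMk measurable_snd
  refine Measure.ext fun s hs => ?_
  rw [Measure.map_apply hg hs, Measure.compProd_apply (hg hs), Measure.compProd_apply hs,
    lintegral_map (Kernel.measurable_kernel_prodMk_left hs) measurable_snd]
  refine lintegral_congr fun w => ?_
  rw [Kernel.comap_apply]
  congr 1

lemma Tmap_snd (R : Measure (Ed d × Ed d)) [IsProbabilityMeasure R] :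
    (R ⊗ₘ K.comap Prod.fst measurable_fst).map Prod.snd
      = (R.map Prod.fst).bind (fun x => K x) := by
  refine Measure.ext fun s hs => ?_
  rw [Measure.map_apply measurable_snd hs, Measure.compProd_apply (measurable_snd hs),
    Measure.bind_apply hs K.measurable.aemeasurable, lintegral_map (Kernel.measurable_coe K hs)
      measurable_fst]
  refine lintegral_congr fun w => ?_
  rw [Kernel.comap_apply]
  congr 1

lemma entChain (hG : IsGibbs Wf K) (R : Measure (Ed d × Ed d)) [IsProbabilityMeasure R] :
    relEnt (R ⊗ₘ K.comap Prod.fst measurable_fst) (R ⊗ₘ K.comap Prod.snd measurable_snd)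
      ≤ ∫⁻ p, relEnt (K p.1) (K p.2) ∂ R := by
  set φ : (Ed d × Ed d) × Ed d → ℝ := fun p => Wf p.1.2 p.2 - Wf p.1.1 p.2 with hφ
  have hφm : Measurable φ :=
    (hG.1.comp ((measurable_snd.comp measurable_fst).prodMk measurable_snd)).sub
      (hG.1.comp ((measurable_fst.comp measurable_fst).prodMk measurable_snd))
  have hT : R ⊗ₘ K.comap Prod.fst measurable_fst =
      (R ⊗ₘ K.comap Prod.snd measurable_snd).withDensity
        (fun p => ENNReal.ofReal (Real.exp (φ p))) := T_eq hG R
  by_cases hI : ∫⁻ p, relEnt (K p.1) (K p.2) ∂ R = ⊤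
  · rw [hI]; exact le_top
  have hpos : ∫⁻ p, ENNReal.ofReal (max (φ p) 0) ∂(R ⊗ₘ K.comap Prod.fst measurable_fst)
      ≤ (∫⁻ p, relEnt (K p.1) (K p.2) ∂ R) + 1 := by
    rw [Measure.lintegral_compProd ((hφm.max measurable_const).ennreal_ofReal)]
    calc ∫⁻ w, ∫⁻ y, ENNReal.ofReal (max (φ (w, y)) 0)
          ∂((K.comap Prod.fst measurable_fst) w) ∂ R
        ≤ ∫⁻ w, (relEnt (K w.1) (K w.2) + 1) ∂ R := by
          refine lintegral_mono fun w => ?_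
          rw [Kernel.comap_apply]
          exact gibbs_pos_part hG w.1 w.2
      _ = (∫⁻ w, relEnt (K w.1) (K w.2) ∂ R) + 1 := by
          rw [lintegral_add_right' _ aemeasurable_const, lintegral_const, measure_univ, mul_one]
  have hneg : ∫⁻ p, ENNReal.ofReal (-min (φ p) 0) ∂(R ⊗ₘ K.comap Prod.fst measurable_fst)
      ≤ 1 := by
    rw [Measure.lintegral_compProd (show Measurable fun p => ENNReal.ofReal (-min (φ p) 0) from
      (hφm.min measurable_const).neg.ennreal_ofReal)]
    calc ∫⁻ w, ∫⁻ y, ENNReal.ofReal (-min (φ (w, y)) 0)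
          ∂((K.comap Prod.fst measurable_fst) w) ∂ R
        ≤ ∫⁻ w, 1 ∂ R := by
          refine lintegral_mono fun w => ?_
          rw [Kernel.comap_apply]
          exact gibbs_neg_part hG w.1 w.2
      _ = 1 := by rw [lintegral_const, measure_univ, mul_one]
  have hint : Integrable φ (R ⊗ₘ K.comap Prod.fst measurable_fst) := by
    refine ⟨hφm.aestronglyMeasurable, ?_⟩
    rw [hasFiniteIntegral_iff_norm]
    have hb : ∀ p, ENNReal.ofReal ‖φ p‖
        ≤ ENNReal.ofReal (max (φ p) 0) + ENNReal.ofReal (-min (φ p) 0) := fun p => by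
      rw [Real.norm_eq_abs,
        ← ENNReal.ofReal_add (le_max_right _ _) (neg_nonneg.mpr (min_le_right _ _))]
      refine ENNReal.ofReal_le_ofReal ?_
      rcases le_total (φ p) 0 with h | h
      · rw [abs_of_nonpos h, max_eq_right h, min_eq_left h]; linarith
      · rw [abs_of_nonneg h, max_eq_left h, min_eq_right h]; linarith
    calc ∫⁻ p, ENNReal.ofReal ‖φ p‖ ∂(R ⊗ₘ K.comap Prod.fst measurable_fst)
        ≤ ∫⁻ p, (ENNReal.ofReal (max (φ p) 0) + ENNReal.ofReal (-min (φ p) 0))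
            ∂(R ⊗ₘ K.comap Prod.fst measurable_fst) := lintegral_mono hb
      _ = (∫⁻ p, ENNReal.ofReal (max (φ p) 0) ∂(R ⊗ₘ K.comap Prod.fst measurable_fst))
          + ∫⁻ p, ENNReal.ofReal (-min (φ p) 0) ∂(R ⊗ₘ K.comap Prod.fst measurable_fst) :=
          lintegral_add_left ((hφm.max measurable_const).ennreal_ofReal) _
      _ < ⊤ := by
          refine ENNReal.add_lt_top.mpr ⟨lt_of_le_of_lt hpos ?_, lt_of_le_of_lt hneg ?_⟩
          · exact ENNReal.add_lt_top.mpr ⟨lt_top_iff_ne_top.mpr hI, ENNReal.one_lt_top⟩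
          · exact ENNReal.one_lt_top
  have hTac : R ⊗ₘ K.comap Prod.fst measurable_fst ≪ R ⊗ₘ K.comap Prod.snd measurable_snd := by
    rw [hT]; exact withDensity_absolutelyContinuous _ _
  have hllrT : llr (R ⊗ₘ K.comap Prod.fst measurable_fst)
      (R ⊗ₘ K.comap Prod.snd measurable_snd) =ᵐ[R ⊗ₘ K.comap Prod.fst measurable_fst] φ := by
    have h1 : (R ⊗ₘ K.comap Prod.fst measurable_fst).rnDeriv
        (R ⊗ₘ K.comap Prod.snd measurable_snd)
        =ᵐ[R ⊗ₘ K.comap Prod.snd measurable_snd] fun p => ENNReal.ofReal (Real.exp (φ p)) := by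
      rw [hT]
      exact Measure.rnDeriv_withDensity _ (hφm.exp.ennreal_ofReal)
    filter_upwards [hTac.ae_le h1] with p hp
    simp only [llr_def, hp, ENNReal.toReal_ofReal (Real.exp_nonneg _), Real.log_exp]
  have hillr : Integrable (llr (R ⊗ₘ K.comap Prod.fst measurable_fst)
      (R ⊗ₘ K.comap Prod.snd measurable_snd)) (R ⊗ₘ K.comap Prod.fst measurable_fst) :=
    hint.congr hllrT.symm
  rw [relEnt_of_ac hTac hillr, integral_congr_ae hllrT, Measure.integral_compProd hint]
  set g : Ed d × Ed d → ℝ := fun w => ∫ y, φ (w, y) ∂((K.comap Prod.fst measurable_fst) w)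
    with hg
  have hgsm : StronglyMeasurable g := hφm.stronglyMeasurable.integral_kernel_prod_right'
  have hg_int : Integrable g R := by
    obtain ⟨h1, h2⟩ := (Measure.integrable_compProd_iff hφm.aestronglyMeasurable).mp hint
    refine Integrable.mono' h2 hgsm.aestronglyMeasurable ?_
    exact ae_of_all _ fun w => norm_integral_le_integral_norm _
  calc ENNReal.ofReal (∫ w, g w ∂ R)
      ≤ ENNReal.ofReal (∫ w, max (g w) 0 ∂ R) :=
        ENNReal.ofReal_le_ofReal (integral_mono hg_int hg_int.pos_part fun w => le_max_left _ _)
    _ = ∫⁻ w, ENNReal.ofReal (max (g w) 0) ∂ R :=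
        ofReal_integral_eq_lintegral_ofReal hg_int.pos_part (ae_of_all _ fun w => le_max_right _ _)
    _ = ∫⁻ w, ENNReal.ofReal (g w) ∂ R := lintegral_congr fun w => ofReal_max_zero (g w)
    _ ≤ ∫⁻ w, relEnt (K w.1) (K w.2) ∂ R := by
        refine lintegral_mono fun w => ?_
        have : g w = ∫ y, (Wf w.2 y - Wf w.1 y) ∂(K w.1) := by
          rw [hg]
          simp only [Kernel.comap_apply]
          rfl
        rw [this]
        exact gibbs_relEnt_ge hG w.1 w.2

end GibbsAux

/-- entropic estimates for the Schrödinger bridge from `μ` to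
`η = πK` with reference `Q = μ × K`, for a Gibbs kernel satisfying `LS_loc(ρ)`
and `J₂(κ)` when `μ` satisfies `T2(υ)`. -/
theorem bridge_reference_flexibility
    (d : ℕ) (hd : 1 ≤ d)
    (μ π : Measure (Ed d)) [IsProbabilityMeasure μ] [IsProbabilityMeasure π]
    (Wf : Ed d → Ed d → ℝ) (K : Kernel (Ed d) (Ed d)) [IsMarkovKernel K]
    (hG : IsGibbs Wf K) (ρ κ υ : ℝ) (hρ : 0 < ρ) (hκ : 0 < κ) (hυ : 0 < υ)
    (hLS : LSloc Wf K ρ) (hJ : FisherLip Wf K κ)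
    (hT2μ : SatT2 μ υ)
    (Pstar : Measure (Ed d × Ed d)) [IsProbabilityMeasure Pstar]
    (hco : isCoupling Pstar μ (mbind π K))
    (hmin : ∀ Q' : Measure (Ed d × Ed d), IsProbabilityMeasure Q' →
      isCoupling Q' μ (mbind π K) → relEnt Pstar (μ ⊗ₘ K) ≤ relEnt Q' (μ ⊗ₘ K)) :
    relEnt (mbind π K) (mbind μ K) ≤ relEnt Pstar (μ ⊗ₘ K) ∧
      relEnt Pstar (μ ⊗ₘ K) ≤ entCost K π μ ∧
        entCost K π μ ≤ ENNReal.ofReal (κ ^ 2 * ρ * υ) * relEnt π μ := by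
  have hg : Measurable fun p : (Ed d × Ed d) × Ed d => (p.1.2, p.2) :=
    (measurable_snd.comp measurable_fst).prodMk measurable_snd
  haveI hQprob : IsProbabilityMeasure (μ ⊗ₘ K) := by
    constructor
    rw [Measure.compProd_apply MeasurableSet.univ]
    simp
  refine ⟨?_, ?_, ?_⟩
  · rw [← hco.2, ← compProd_map_snd μ]
    exact relEnt_map_le Pstar (μ ⊗ₘ K) measurable_snd
  · unfold entCost
    refine le_iInf₂ fun R hR => ?_
    haveI hRprob : IsProbabilityMeasure R := by
      constructor
      have h := congrArg (fun m : Measure (Ed d) => m Set.univ) hR.1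
      simp only [Measure.map_apply measurable_fst MeasurableSet.univ, Set.preimage_univ] at h
      rw [h]
      exact measure_univ
    haveI : IsProbabilityMeasure (R ⊗ₘ K.comap Prod.fst measurable_fst) := by
      constructor
      rw [Measure.compProd_apply MeasurableSet.univ]
      simp
    haveI : IsProbabilityMeasure (R ⊗ₘ K.comap Prod.snd measurable_snd) := by
      constructor
      rw [Measure.compProd_apply MeasurableSet.univ]
      simp
    haveI : IsProbabilityMeasure ((R ⊗ₘ K.comap Prod.fst measurable_fst).map
        (fun p : (Ed d × Ed d) × Ed d => (p.1.2, p.2))) :=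
      Measure.isProbabilityMeasure_map hg.aemeasurable
    have hcop : isCoupling ((R ⊗ₘ K.comap Prod.fst measurable_fst).map
        (fun p : (Ed d × Ed d) × Ed d => (p.1.2, p.2))) μ (mbind π K) := by
      constructor
      · rw [Measure.map_map measurable_fst hg]
        have he : (Prod.fst ∘ fun p : (Ed d × Ed d) × Ed d => (p.1.2, p.2))
            = (Prod.snd ∘ Prod.fst) := rfl
        rw [he, ← Measure.map_map measurable_snd measurable_fst]
        have hfst : (R ⊗ₘ K.comap Prod.fst measurable_fst).map Prod.fst = R :=
          Measure.fst_compProd R _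
        rw [hfst, hR.2]
      · rw [Measure.map_map measurable_snd hg]
        have he : (Prod.snd ∘ fun p : (Ed d × Ed d) × Ed d => (p.1.2, p.2)) = Prod.snd := rfl
        rw [he, Tmap_snd R, hR.1, mbind]
    refine le_trans (hmin _ inferInstance hcop) ?_
    have hQref : μ ⊗ₘ K = (R ⊗ₘ K.comap Prod.snd measurable_snd).map
        (fun p : (Ed d × Ed d) × Ed d => (p.1.2, p.2)) := by
      rw [Tmap_g R, hR.2]
    rw [hQref]
    exact le_trans (relEnt_map_le _ _ hg) (entChain hG R)
  · set c := ENNReal.ofReal (ρ * κ ^ 2 / 2) with hc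
    have hc0 : c ≠ 0 := (ENNReal.ofReal_pos.mpr (by positivity)).ne'
    have hcT : c ≠ ⊤ := ENNReal.ofReal_ne_top
    have hcostm : Measurable fun p : Ed d × Ed d => ENNReal.ofReal (‖p.1 - p.2‖ ^ 2) :=
      (((measurable_fst.sub measurable_snd).norm).pow_const 2).ennreal_ofReal
    have hpt : ∀ p : Ed d × Ed d,
        relEnt (K p.1) (K p.2) ≤ c * ENNReal.ofReal (‖p.1 - p.2‖ ^ 2) := fun p => by
      refine le_trans (hLS p.1 p.2) ?_
      refine le_trans (mul_le_mul_right (hJ p.1 p.2) _) ?_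
      rw [← ENNReal.ofReal_mul (by positivity : (0:ℝ) ≤ ρ / 2), hc,
        ← ENNReal.ofReal_mul (by positivity : (0:ℝ) ≤ ρ * κ ^ 2 / 2)]
      refine le_of_eq (congrArg ENNReal.ofReal ?_)
      ring
    have hstep : ∀ P : Measure (Ed d × Ed d), isCoupling P π μ →
        entCost K π μ / c ≤ ∫⁻ p, ENNReal.ofReal (‖p.1 - p.2‖ ^ 2) ∂P := by
      intro P hP
      rw [ENNReal.div_le_iff_le_mul (Or.inl hc0) (Or.inl hcT)]
      calc entCost K π μ ≤ ∫⁻ p, relEnt (K p.1) (K p.2) ∂P := by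
            unfold entCost
            exact iInf₂_le P hP
        _ ≤ ∫⁻ p, c * ENNReal.ofReal (‖p.1 - p.2‖ ^ 2) ∂P := lintegral_mono hpt
        _ = c * ∫⁻ p, ENNReal.ofReal (‖p.1 - p.2‖ ^ 2) ∂P := lintegral_const_mul c hcostm
        _ = (∫⁻ p, ENNReal.ofReal (‖p.1 - p.2‖ ^ 2) ∂P) * c := mul_comm _ _
    have hW : entCost K π μ / c ≤ W2sq π μ := by
      unfold W2sq
      exact le_iInf₂ hstep
    have hmain : entCost K π μ ≤ c * W2sq π μ := by
      have h := (ENNReal.div_le_iff_le_mul (Or.inl hc0) (Or.inl hcT)).mp hW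
      rwa [mul_comm] at h
    have hT2 : W2sq π μ ≤ 2 * (ENNReal.ofReal υ * relEnt π μ) := by
      have h := hT2μ π inferInstance
      calc W2sq π μ = 2 * ((1 / 2 : ℝ≥0∞) * W2sq π μ) := by
            rw [← mul_assoc, one_div, ENNReal.mul_inv_cancel two_ne_zero ENNReal.ofNat_ne_top,
              one_mul]
        _ ≤ 2 * (ENNReal.ofReal υ * relEnt π μ) := mul_le_mul_right h 2
    calc entCost K π μ ≤ c * W2sq π μ := hmain
      _ ≤ c * (2 * (ENNReal.ofReal υ * relEnt π μ)) := mul_le_mul_right hT2 c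
      _ = (c * 2 * ENNReal.ofReal υ) * relEnt π μ := by ring
      _ = ENNReal.ofReal (κ ^ 2 * ρ * υ) * relEnt π μ := by
          congr 1
          rw [hc, (by norm_num : (2:ℝ≥0∞) = ENNReal.ofReal 2),
            ← ENNReal.ofReal_mul (by positivity), ← ENNReal.ofReal_mul (by positivity)]
          congr 1
          ring
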